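/- Let ω = -1/2 + (√3/2)e₁ be a primitive cube root of unity in the complex subfield C = R + Re₁ of the quaternions H. Then the map γ₃ on the Cayley algebra C⊕ = H ⊕ He₄ defined by γ₃(m + ne₄) = m + (ωn)e₄ is an algebra automorphism of the Cayley algebra of order 3. -/

import Mathlib

open Quaternion

noncomputable section

/-- The Cayley algebra (octonions), realized as `ℍ ⊕ ℍe₄`. -/
abbrev Oct := ℍ[ℝ] × ℍ[ℝ]

/-- Octonion multiplication: `(a + be₄)(c + de₄) = (ac - d̄b) + (da + bc̄)e₄`. -/
def omul (x y : Oct) : Oct :=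
  (x.1 * y.1 - star y.2 * x.2, y.2 * x.1 + x.2 * star y.1)

/-- `ω = -1/2 + (√3/2)e₁`, a primitive cube root of unity in the complex subfield
`ℝ + ℝe₁` of the quaternions. -/
def ωq : ℍ[ℝ] := ⟨-1/2, Real.sqrt 3 / 2, 0, 0⟩

/-- `γ₃(m + ne₄) = m + (ωn)e₄`. -/
def γ₃ (x : Oct) : Oct := (x.1, ωq * x.2)

def mulSnd (u : ℍ[ℝ]) (x : Oct) : Oct := (x.1, u * x.2)

lemma γ₃_eq_mulSnd : γ₃ = mulSnd ωq := rfl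

section mulSnd

variable {u v : ℍ[ℝ]}

/-- The `e₄`-part of a product is left `ℍ`-linear in the `e₄`-parts, and the cross term of the
`ℍ`-part is unchanged: `(ud)‾(ub) = d̄ ū u b = d̄b`. -/
lemma mulSnd_omul (hu : star u * u = 1) (x y : Oct) :
    mulSnd u (omul x y) = omul (mulSnd u x) (mulSnd u y) := by
  simp only [mulSnd, omul, Prod.mk.injEq]
  constructor
  · rw [star_mul, mul_assoc, ← mul_assoc (star u), hu, one_mul]
  · rw [mul_add, mul_assoc, mul_assoc]

lemma mulSnd_add (x y : Oct) : mulSnd u (x + y) = mulSnd u x + mulSnd u y := by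
  simp [mulSnd, mul_add]

lemma mulSnd_smul (r : ℝ) (x : Oct) : mulSnd u (r • x) = r • mulSnd u x := by
  simp [mulSnd]

lemma mulSnd_mulSnd (x : Oct) : mulSnd u (mulSnd v x) = mulSnd (u * v) x := by
  simp [mulSnd, mul_assoc]

lemma mulSnd_one : mulSnd 1 = id := by
  funext x
  simp [mulSnd]

lemma mulSnd_bijective (hu : u ≠ 0) : Function.Bijective (mulSnd u) :=
  Function.bijective_iff_has_inverse.2 ⟨mulSnd u⁻¹,
    fun x => by rw [mulSnd_mulSnd, inv_mul_cancel₀ hu, mulSnd_one, id],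
    fun x => by rw [mulSnd_mulSnd, mul_inv_cancel₀ hu, mulSnd_one, id]⟩

lemma mulSnd_eq_id_iff : mulSnd u = id ↔ u = 1 := by
  refine ⟨fun h => ?_, fun h => h ▸ mulSnd_one⟩
  simpa [mulSnd] using congrFun h (0, 1)

end mulSnd

@[simp] lemma re_ωq : ωq.re = -1/2 := rfl
@[simp] lemma imI_ωq : ωq.imI = Real.sqrt 3 / 2 := rfl
@[simp] lemma imJ_ωq : ωq.imJ = 0 := rfl
@[simp] lemma imK_ωq : ωq.imK = 0 := rfl

lemma ωq_mul_self : ωq * ωq = star ωq := by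
  have h3 : Real.sqrt 3 ^ 2 = 3 := Real.sq_sqrt (by norm_num)
  ext <;> simp [Quaternion.re_mul, Quaternion.imI_mul, Quaternion.imJ_mul,
    Quaternion.imK_mul] <;> nlinarith [h3]

lemma star_ωq_mul_self : star ωq * ωq = 1 := by
  have h3 : Real.sqrt 3 ^ 2 = 3 := Real.sq_sqrt (by norm_num)
  ext <;> simp [Quaternion.re_mul, Quaternion.imI_mul, Quaternion.imJ_mul,
    Quaternion.imK_mul] <;> nlinarith [h3]

lemma ωq_pow_three : ωq ^ 3 = 1 := by
  rw [pow_succ, sq, ωq_mul_self, star_ωq_mul_self]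

lemma ωq_ne_zero : ωq ≠ 0 := fun h => by
  simpa using congrArg (·.re) h

lemma ωq_ne_one : ωq ≠ 1 := fun h => absurd (congrArg (·.re) h) (by norm_num)

/-- `γ₃` is an algebra automorphism of the Cayley algebra of order `3`. -/
theorem γ₃_is_automorphism_of_order_three :
    -- `γ₃` is multiplicative
    (∀ x y : Oct, γ₃ (omul x y) = omul (γ₃ x) (γ₃ y)) ∧
    -- `γ₃` is `ℝ`-linear
    (∀ x y : Oct, γ₃ (x + y) = γ₃ x + γ₃ y) ∧
    (∀ (r : ℝ) (x : Oct), γ₃ (r • x) = r • γ₃ x) ∧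
    -- `γ₃` is bijective
    Function.Bijective γ₃ ∧
    -- `γ₃` has order `3`
    (∀ x, γ₃ (γ₃ (γ₃ x)) = x) ∧ γ₃ ≠ id := by
  rw [γ₃_eq_mulSnd]
  refine ⟨mulSnd_omul star_ωq_mul_self, mulSnd_add, mulSnd_smul,
    mulSnd_bijective ωq_ne_zero, fun x => ?_, mulSnd_eq_id_iff.not.2 ωq_ne_one⟩
  rw [mulSnd_mulSnd, mulSnd_mulSnd, ← pow_three', ωq_pow_three, mulSnd_one, id]
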